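/- arXiv:1509.05815 — 2 statements merged into one kernel-verified Lean document; each statement's English description precedes it below -/
import Mathlib

section
/- Fix positive integer weights (m_1, …, m_M) with m_1 + ⋯ + m_M = N − 1. The vertices (extreme points) of the polytope D of weighted doubly stochastic tw-matrices are exactly the matrices Y_𝓘 for ordered partitions 𝓘 = (I_1, …, I_M) of {1, …, N−1} with |I_i| = m_i, where (Y_𝓘)_{ij} = 1/m_i if j ∈ I_i and (Y_𝓘)_{ij} = 0 otherwise. -/
/-- An ordered partition of the column set `Fin n` into blocks of sizes `m i`. -/
def IsTWPartition {M n : ℕ} (m : Fin M → ℕ) (P : Fin M → Finset (Fin n)) : Prop :=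
  (∀ i, (P i).card = m i) ∧ ∀ j : Fin n, ∃! i, j ∈ P i

/-- The polytope of weighted doubly stochastic tw-matrices: entrywise nonnegative
`M × n` matrices with all row sums `1` and all weighted column sums `1`. -/
def stochPolytope {M n : ℕ} (m : Fin M → ℕ) : Set (Fin M → Fin n → ℝ) :=
  {Y | (∀ i j, 0 ≤ Y i j) ∧ (∀ i, ∑ j, Y i j = 1) ∧ ∀ j, ∑ i, (m i : ℝ) * Y i j = 1}

/-!
Blowing each row `i` of a matrix in `D` up into `m i` equal rows gives a doubly stochastic
`n × n` matrix, and averaging the rows of a doubly stochastic matrix over blocks of sizes `m i`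
lands back in `D`. So `D` is a linear image of the Birkhoff polytope, hence by Birkhoff's
theorem the convex hull of the images of the permutation matrices, which are exactly the
matrices `Y_𝓘`; every extreme point of `D` is therefore some `Y_𝓘`. Conversely, `Y_𝓘` is the
only point of `D` vanishing off its support, so it is extreme.
-/

open Finset

noncomputable section

variable {M n : ℕ}

def twMatrix (m : Fin M → ℕ) (P : Fin M → Finset (Fin n)) : Fin M → Fin n → ℝ :=
  fun i j => if j ∈ P i then ((m i : ℝ))⁻¹ else 0

section twMatrix

variable {m : Fin M → ℕ} {P : Fin M → Finset (Fin n)}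

theorem twMatrix_mem_stochPolytope (hm : ∀ i, 0 < m i) (hP : IsTWPartition m P) :
    twMatrix m P ∈ stochPolytope m := by
  obtain ⟨hcard, hunique⟩ := hP
  have hm' : ∀ i, (m i : ℝ) ≠ 0 := fun i => Nat.cast_ne_zero.2 (hm i).ne'
  refine ⟨fun i j => ?_, fun i => ?_, fun j => ?_⟩
  · unfold twMatrix; split_ifs <;> positivity
  · simp [twMatrix, sum_ite_mem, hcard, hm']
  · obtain ⟨i, hi, hi_unique⟩ := hunique j
    rw [sum_eq_single i (fun k _ hki => by simp [twMatrix, mt (hi_unique k) hki]) (by simp)]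
    simp [twMatrix, hi, hm']

theorem eq_twMatrix_of_mem_stochPolytope (hP : IsTWPartition m P) {Y : Fin M → Fin n → ℝ}
    (hY : Y ∈ stochPolytope m) (hzero : ∀ i j, j ∉ P i → Y i j = 0) : Y = twMatrix m P := by
  funext i j
  by_cases hij : j ∈ P i
  · have hcol : (m i : ℝ) * Y i j = 1 := by
      rw [← hY.2.2 j, sum_eq_single i (fun k _ hki => ?_) (by simp)]
      rw [hzero k j fun hkj => hki ((hP.2 j).unique hkj hij), mul_zero]
    simp [twMatrix, hij, eq_inv_of_mul_eq_one_right hcol]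
  · simp [twMatrix, hij, hzero i j hij]

theorem twMatrix_mem_extremePoints (hm : ∀ i, 0 < m i) (hP : IsTWPartition m P) :
    twMatrix m P ∈ Set.extremePoints ℝ (stochPolytope m) := by
  refine ⟨twMatrix_mem_stochPolytope hm hP, fun Y₁ hY₁ Y₂ hY₂ ⟨a, b, ha, hb, _, hY⟩ => ?_⟩
  refine eq_twMatrix_of_mem_stochPolytope hP hY₁ fun i j hij => ?_
  have hsum : a * Y₁ i j + b * Y₂ i j = 0 := by
    simpa [twMatrix, hij] using congrFun (congrFun hY i) j
  have haY₁ := ((add_eq_zero_iff_of_nonneg (mul_nonneg ha.le (hY₁.1 i j))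
    (mul_nonneg hb.le (hY₂.1 i j))).1 hsum).1
  exact (mul_eq_zero.1 haY₁).resolve_left ha.ne'

end twMatrix

section blockAverage

variable {m : Fin M → ℕ} {b : Fin n → Fin M}

theorem exists_card_fiber_eq (hw : ∑ i, m i = n) :
    ∃ b : Fin n → Fin M, ∀ i, #{k | b k = i} = m i := by
  subst hw
  refine ⟨fun k => (finSigmaFinEquiv.symm k).1, fun i => ?_⟩
  rw [card_equiv finSigmaFinEquiv.symm (t := {x | x.1 = i}) (by simp), ← Fintype.card_subtype,
    Fintype.card_congr (Equiv.sigmaSubtype i), Fintype.card_fin]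

theorem isTWPartition_fibers (hb : ∀ i, #{k | b k = i} = m i) :
    IsTWPartition m fun i => {k | b k = i} :=
  ⟨hb, fun j => ⟨b j, by simp, by simp⟩⟩

theorem sum_fiber_comp (hb : ∀ i, #{k | b k = i} = m i) (f : Fin M → ℝ) (i : Fin M) :
    ∑ k with b k = i, f (b k) = m i * f i := by
  rw [sum_congr rfl fun k hk => by rw [(mem_filter.1 hk).2], sum_const, hb, nsmul_eq_mul]

variable (m b) in
def blockAverage : Matrix (Fin n) (Fin n) ℝ →ₗ[ℝ] Fin M → Fin n → ℝ where
  toFun X i j := (m i : ℝ)⁻¹ * ∑ k with b k = i, X k j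
  map_add' X X' := by ext i j; simp [sum_add_distrib, mul_add]
  map_smul' c X := by ext i j; simp [mul_sum, mul_left_comm]

theorem blockAverage_apply (X : Matrix (Fin n) (Fin n) ℝ) (i : Fin M) (j : Fin n) :
    blockAverage m b X i j = (m i : ℝ)⁻¹ * ∑ k with b k = i, X k j :=
  rfl

theorem blockAverage_mem_stochPolytope (hm : ∀ i, 0 < m i) (hb : ∀ i, #{k | b k = i} = m i)
    {X : Matrix (Fin n) (Fin n) ℝ} (hX : X ∈ doublyStochastic ℝ (Fin n)) :
    blockAverage m b X ∈ stochPolytope m := by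
  obtain ⟨hnonneg, hrow, hcol⟩ := mem_doublyStochastic_iff_sum.1 hX
  have hm' : ∀ i, (m i : ℝ) ≠ 0 := fun i => Nat.cast_ne_zero.2 (hm i).ne'
  refine ⟨fun i j => ?_, fun i => ?_, fun j => ?_⟩
  · exact mul_nonneg (by positivity) (sum_nonneg fun k _ => hnonneg k j)
  · simp_rw [blockAverage_apply, ← mul_sum]
    rw [sum_comm]
    simp [hrow, hb, hm']
  · simp_rw [blockAverage_apply, ← mul_assoc, mul_inv_cancel₀ (hm' _), one_mul]
    rw [sum_fiberwise, hcol]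

theorem comp_mem_doublyStochastic (hb : ∀ i, #{k | b k = i} = m i) {Y : Fin M → Fin n → ℝ}
    (hY : Y ∈ stochPolytope m) : Matrix.of (Y ∘ b) ∈ doublyStochastic ℝ (Fin n) := by
  obtain ⟨hnonneg, hrow, hcol⟩ := hY
  refine mem_doublyStochastic_iff_sum.2 ⟨fun k j => hnonneg _ _, fun k => hrow _, fun j => ?_⟩
  simp_rw [Matrix.of_apply, Function.comp_apply, ← sum_fiberwise univ b,
    sum_fiber_comp hb fun i => Y i j, hcol]

theorem blockAverage_comp (hm : ∀ i, 0 < m i) (hb : ∀ i, #{k | b k = i} = m i)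
    (Y : Fin M → Fin n → ℝ) : blockAverage m b (Matrix.of (Y ∘ b)) = Y := by
  ext i j
  simp_rw [blockAverage_apply, Matrix.of_apply, Function.comp_apply,
    sum_fiber_comp hb fun i => Y i j, inv_mul_cancel_left₀ (Nat.cast_ne_zero.2 (hm i).ne' : (m i : ℝ) ≠ 0)]

theorem blockAverage_image_doublyStochastic (hm : ∀ i, 0 < m i)
    (hb : ∀ i, #{k | b k = i} = m i) :
    blockAverage m b '' doublyStochastic ℝ (Fin n) = stochPolytope m := by
  refine subset_antisymm ?_ fun Y hY =>
    ⟨Matrix.of (Y ∘ b), comp_mem_doublyStochastic hb hY, blockAverage_comp hm hb Y⟩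
  rintro _ ⟨X, hX, rfl⟩
  exact blockAverage_mem_stochPolytope hm hb hX

theorem stochPolytope_eq_convexHull (hm : ∀ i, 0 < m i) (hb : ∀ i, #{k | b k = i} = m i) :
    stochPolytope m =
      convexHull ℝ (blockAverage m b '' {σ.permMatrix ℝ | σ : Equiv.Perm (Fin n)}) := by
  rw [← blockAverage_image_doublyStochastic hm hb, doublyStochastic_eq_convexHull_permMatrix,
    LinearMap.image_convexHull]

theorem blockAverage_permMatrix (σ : Equiv.Perm (Fin n)) :
    blockAverage m b (σ.permMatrix ℝ) = twMatrix m fun i => {j | b (σ.symm j) = i} := by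
  ext i j
  have hentry : ∀ k, σ.permMatrix ℝ k j = if σ.symm j = k then 1 else 0 := fun k => by
    simp [Equiv.symm_apply_eq, @eq_comm _ j]
  rw [blockAverage_apply, twMatrix]
  simp_rw [hentry, sum_ite_eq, mem_filter, mem_univ, true_and]
  split_ifs <;> simp

end blockAverage

end

/-- The vertices (extreme points) of the polytope of weighted doubly stochastic
tw-matrices (with `m 0 + ⋯ + m (M-1) = N - 1 = n`) are exactly the matrices `Y_𝓘`
associated to ordered partitions `𝓘` of the columns, where `(Y_𝓘) i j = 1 / m i` if
`j ∈ I_i` and `0` otherwise. -/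
theorem extremePoints_stochPolytope {M n : ℕ} (m : Fin M → ℕ)
    (hm : ∀ i, 1 ≤ m i) (hw : ∑ i, m i = n) (Y : Fin M → Fin n → ℝ) :
    Y ∈ Set.extremePoints ℝ (stochPolytope m) ↔
      ∃ P : Fin M → Finset (Fin n), IsTWPartition m P ∧
        Y = fun i j => if j ∈ P i then ((m i : ℝ))⁻¹ else 0 := by
  constructor
  · intro hY
    obtain ⟨b, hb⟩ := exists_card_fiber_eq hw
    rw [stochPolytope_eq_convexHull hm hb] at hY
    obtain ⟨_, ⟨σ, rfl⟩, rfl⟩ := extremePoints_convexHull_subset hY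
    have hbσ : ∀ i, #{j | b (σ.symm j) = i} = m i := fun i =>
      (card_equiv σ.symm (by simp)).trans (hb i)
    exact ⟨_, isTWPartition_fibers hbσ, blockAverage_permMatrix σ⟩
  · rintro ⟨P, hP, rfl⟩
    exact twMatrix_mem_extremePoints hm hP
end

section
/- Fix positive integer weights (m_1, …, m_M) with m_1 + ⋯ + m_M = N − 1, and let A be an (N−1) × (N−1) tw-matrix with these weights. Then min_{Y ∈ D} ⟨A, Y⟩_w equals the tw-permanent of A, and the minimizing Y ∈ D is unique if and only if A is tw-nonsingular. -/
/-- The sum `Σ_i Σ_{j ∈ I_i} A_{ij}` associated to an ordered partition. -/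
def partSum {M n : ℕ} (A : Fin M → Fin n → ℝ) (P : Fin M → Finset (Fin n)) : ℝ :=
  ∑ i, ∑ j ∈ P i, A i j

/-- The tw-permanent: the minimum of `partSum` over all ordered partitions. -/
noncomputable def twPerm {M n : ℕ} (m : Fin M → ℕ) (A : Fin M → Fin n → ℝ) : ℝ :=
  sInf (partSum A '' {P | IsTWPartition m P})

/-- `A` is tw-singular: the minimum in the tw-permanent is attained by at least two
distinct ordered partitions. -/
def TWSingular {M n : ℕ} (m : Fin M → ℕ) (A : Fin M → Fin n → ℝ) : Prop :=
  ∃ P Q : Fin M → Finset (Fin n), IsTWPartition m P ∧ IsTWPartition m Q ∧ P ≠ Q ∧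
    partSum A P = partSum A Q ∧ ∀ R, IsTWPartition m R → partSum A P ≤ partSum A R

/-- The weighted inner product `⟨A, Y⟩_w = Σ_{i,j} m_i A_{ij} Y_{ij}`. -/
def wip {M n : ℕ} (m : Fin M → ℕ) (A Y : Fin M → Fin n → ℝ) : ℝ :=
  ∑ i, ∑ j, (m i : ℝ) * A i j * Y i j

section TWAux

variable {M n : ℕ} {m : Fin M → ℕ}

/-- Expand a sum over the sigma type into a double sum. -/
private lemma tw_sum_sigma (f : (Σ i : Fin M, Fin (m i)) → ℝ) :
    ∑ p : Σ i : Fin M, Fin (m i), f p = ∑ i, ∑ k : Fin (m i), f ⟨i, k⟩ := by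
  rw [← Finset.univ_sigma_univ, Finset.sum_sigma]

/-- The ordered partition induced by a permutation of columns. -/
private def permPart (e : (Σ i : Fin M, Fin (m i)) ≃ Fin n) (σ : Equiv.Perm (Fin n)) :
    Fin M → Finset (Fin n) :=
  fun i => Finset.univ.image fun k : Fin (m i) => σ (e ⟨i, k⟩)

private lemma mem_permPart (e : (Σ i : Fin M, Fin (m i)) ≃ Fin n) (σ : Equiv.Perm (Fin n))
    (i : Fin M) (j : Fin n) :
    j ∈ permPart e σ i ↔ (e.symm (σ.symm j)).1 = i := by
  simp only [permPart, Finset.mem_image, Finset.mem_univ, true_and]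
  constructor
  · rintro ⟨k, rfl⟩
    simp
  · rintro rfl
    exact ⟨(e.symm (σ.symm j)).2, by rw [Sigma.eta]; simp⟩

private lemma isTW_permPart (e : (Σ i : Fin M, Fin (m i)) ≃ Fin n) (σ : Equiv.Perm (Fin n)) :
    IsTWPartition m (permPart e σ) := by
  constructor
  · intro i
    rw [permPart, Finset.card_image_of_injective _ ?_, Finset.card_univ, Fintype.card_fin]
    intro a b hab
    have h2 := e.injective (σ.injective hab)
    simpa using h2
  · intro j
    exact ⟨(e.symm (σ.symm j)).1, (mem_permPart e σ _ j).2 rfl,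
      fun i hi => ((mem_permPart e σ i j).1 hi).symm⟩

private lemma partSum_permPart (A : Fin M → Fin n → ℝ) (e : (Σ i : Fin M, Fin (m i)) ≃ Fin n)
    (σ : Equiv.Perm (Fin n)) :
    partSum A (permPart e σ) = ∑ p : Σ i : Fin M, Fin (m i), A p.1 (σ (e p)) := by
  rw [tw_sum_sigma]
  unfold partSum permPart
  refine Finset.sum_congr rfl fun i _ => Finset.sum_image fun a _ b _ hab => ?_
  have h2 := e.injective (σ.injective hab)
  simpa using h2

/-- The canonical polytope element associated to a partition. -/
private noncomputable def twY (m : Fin M → ℕ) (P : Fin M → Finset (Fin n)) : Fin M → Fin n → ℝ :=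
  fun i j => if j ∈ P i then ((m i : ℝ))⁻¹ else 0

private lemma twY_mem (hm : ∀ i, 1 ≤ m i) {P : Fin M → Finset (Fin n)}
    (hP : IsTWPartition m P) : twY m P ∈ stochPolytope m := by
  have hm0 : ∀ i, (m i : ℝ) ≠ 0 := fun i => Nat.cast_ne_zero.2 (by have := hm i; omega)
  refine ⟨fun i j => ?_, fun i => ?_, fun j => ?_⟩
  · unfold twY; split
    · positivity
    · exact le_rfl
  · unfold twY
    rw [Finset.sum_ite_mem, Finset.univ_inter, Finset.sum_const, hP.1 i, nsmul_eq_mul,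
      mul_inv_cancel₀ (hm0 i)]
  · obtain ⟨i0, hi0, hiu⟩ := hP.2 j
    rw [Finset.sum_eq_single i0]
    · unfold twY
      rw [if_pos hi0, mul_inv_cancel₀ (hm0 i0)]
    · intro i _ hne
      unfold twY
      rw [if_neg (fun h => hne (hiu i h)), mul_zero]
    · intro h
      exact absurd (Finset.mem_univ i0) h

private lemma wip_twY (hm : ∀ i, 1 ≤ m i) (A : Fin M → Fin n → ℝ) (P : Fin M → Finset (Fin n)) :
    wip m A (twY m P) = partSum A P := by
  have hm0 : ∀ i, (m i : ℝ) ≠ 0 := fun i => Nat.cast_ne_zero.2 (by have := hm i; omega)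
  unfold wip twY partSum
  refine Finset.sum_congr rfl fun i _ => ?_
  have : ∀ j : Fin n, (m i : ℝ) * A i j * (if j ∈ P i then ((m i : ℝ))⁻¹ else 0)
      = if j ∈ P i then A i j else 0 := by
    intro j
    split
    · rw [mul_comm ((m i : ℝ)) (A i j), mul_assoc, mul_inv_cancel₀ (hm0 i), mul_one]
    · rw [mul_zero]
  rw [Finset.sum_congr rfl fun j _ => this j, Finset.sum_ite_mem, Finset.univ_inter]

private lemma permMatrix_entry (σ : Equiv.Perm (Fin n)) (r j : Fin n) :
    (σ.permMatrix ℝ) r j = if σ r = j then 1 else 0 := by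
  simp [Equiv.Perm.permMatrix, PEquiv.toMatrix_apply, Equiv.toPEquiv_apply]

/-- The key decomposition: any element of the polytope induces a doubly stochastic matrix,
which by Birkhoff is a convex combination of permutation matrices. -/
private lemma tw_key (A : Fin M → Fin n → ℝ) (e : (Σ i : Fin M, Fin (m i)) ≃ Fin n)
    {Y : Fin M → Fin n → ℝ} (hY : Y ∈ stochPolytope m) :
    ∃ w : Equiv.Perm (Fin n) → ℝ, (∀ σ, 0 ≤ w σ) ∧ (∑ σ, w σ = 1) ∧
      wip m A Y = ∑ σ, w σ * partSum A (permPart e σ) ∧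
      ∀ (p : Σ i : Fin M, Fin (m i)) (j : Fin n),
        Y p.1 j = ∑ σ, w σ * (σ.permMatrix ℝ) (e p) j := by
  classical
  set B : Matrix (Fin n) (Fin n) ℝ := Matrix.of fun r j => Y (e.symm r).1 j with hB
  have hBmem : B ∈ doublyStochastic ℝ (Fin n) := by
    rw [mem_doublyStochastic_iff_sum]
    refine ⟨fun r j => hY.1 _ _, fun r => hY.2.1 _, fun j => ?_⟩
    calc ∑ r, B r j = ∑ p : Σ i : Fin M, Fin (m i), Y p.1 j :=
          Equiv.sum_comp e.symm (fun p => Y p.1 j)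
      _ = ∑ i, ∑ _k : Fin (m i), Y i j := tw_sum_sigma _
      _ = ∑ i, (m i : ℝ) * Y i j := by
          refine Finset.sum_congr rfl fun i _ => ?_
          rw [Finset.sum_const, Finset.card_univ, Fintype.card_fin, nsmul_eq_mul]
      _ = 1 := hY.2.2 j
  obtain ⟨w, hw0, hw1, hw3⟩ := exists_eq_sum_perm_of_mem_doublyStochastic hBmem
  have hentry : ∀ r j, B r j = ∑ σ, w σ * (σ.permMatrix ℝ) r j := by
    intro r j
    rw [← hw3]
    simp [Matrix.sum_apply]
  have hYentry : ∀ (p : Σ i : Fin M, Fin (m i)) (j : Fin n),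
      Y p.1 j = ∑ σ, w σ * (σ.permMatrix ℝ) (e p) j := by
    intro p j
    have hBe : B (e p) j = Y p.1 j := by simp [hB]
    rw [← hBe, hentry]
  refine ⟨w, hw0, hw1, ?_, hYentry⟩
  have hstep1 : wip m A Y = ∑ p : Σ i : Fin M, Fin (m i), ∑ j, A p.1 j * Y p.1 j := by
    rw [tw_sum_sigma]
    unfold wip
    refine Finset.sum_congr rfl fun i _ => ?_
    calc ∑ j, (m i : ℝ) * A i j * Y i j = (m i : ℝ) * ∑ j, A i j * Y i j := by
          rw [Finset.mul_sum]
          exact Finset.sum_congr rfl fun j _ => by ring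
      _ = ∑ _k : Fin (m i), ∑ j, A i j * Y i j := by
          rw [Finset.sum_const, Finset.card_univ, Fintype.card_fin, nsmul_eq_mul]
  rw [hstep1]
  have hsw : ∀ p : Σ i : Fin M, Fin (m i), ∑ j, A p.1 j * Y p.1 j
      = ∑ σ, w σ * A p.1 (σ (e p)) := by
    intro p
    calc ∑ j, A p.1 j * Y p.1 j
        = ∑ j, ∑ σ, A p.1 j * (w σ * (if σ (e p) = j then 1 else 0)) := by
          refine Finset.sum_congr rfl fun j _ => ?_
          rw [hYentry p j, Finset.mul_sum]
          exact Finset.sum_congr rfl fun σ _ => by rw [permMatrix_entry]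
      _ = ∑ σ, ∑ j, A p.1 j * (w σ * (if σ (e p) = j then 1 else 0)) := Finset.sum_comm
      _ = ∑ σ, w σ * A p.1 (σ (e p)) := by
          refine Finset.sum_congr rfl fun σ _ => ?_
          rw [Finset.sum_eq_single (σ (e p))]
          · rw [if_pos rfl, mul_one]; ring
          · intro j _ hj
            rw [if_neg (Ne.symm hj), mul_zero, mul_zero]
          · intro h
            exact absurd (Finset.mem_univ _) h
  rw [Finset.sum_congr rfl fun p _ => hsw p, Finset.sum_comm]
  refine Finset.sum_congr rfl fun σ _ => ?_
  rw [partSum_permPart A e σ, Finset.mul_sum]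

end TWAux

/-- `min_{Y ∈ D} ⟨A, Y⟩_w` equals the tw-permanent of `A`, and the minimizing `Y ∈ D` is
unique iff `A` is tw-nonsingular. -/
theorem min_wip_stochPolytope {M n : ℕ} (m : Fin M → ℕ)
    (hm : ∀ i, 1 ≤ m i) (hw : ∑ i, m i = n) (A : Fin M → Fin n → ℝ) :
    IsLeast {v : ℝ | ∃ Y ∈ stochPolytope m, v = wip m A Y} (twPerm m A) ∧
      ((∃! Y, Y ∈ stochPolytope m ∧ wip m A Y = twPerm m A) ↔ ¬ TWSingular m A) := by
  classical
  have hm0 : ∀ i, (m i : ℝ) ≠ 0 := fun i => Nat.cast_ne_zero.2 (by have := hm i; omega)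
  obtain ⟨e⟩ : Nonempty ((Σ i : Fin M, Fin (m i)) ≃ Fin n) :=
    ⟨Fintype.equivFinOfCardEq (by simp [hw])⟩
  have hSfin : (partSum A '' {P | IsTWPartition m P}).Finite :=
    Set.Finite.image _ (Set.toFinite _)
  have hSne : (partSum A '' {P | IsTWPartition m P}).Nonempty :=
    ⟨_, ⟨permPart e 1, isTW_permPart e 1, rfl⟩⟩
  have hle : ∀ {P : Fin M → Finset (Fin n)}, IsTWPartition m P → twPerm m A ≤ partSum A P :=
    fun hP => csInf_le hSfin.bddBelow ⟨_, hP, rfl⟩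
  obtain ⟨P0, hP0, hP0val⟩ : ∃ P, IsTWPartition m P ∧ partSum A P = twPerm m A := by
    obtain ⟨P, hP, hval⟩ := hSne.csInf_mem hSfin
    exact ⟨P, hP, hval⟩
  -- lower bound
  have hlb : ∀ Y ∈ stochPolytope m, twPerm m A ≤ wip m A Y := by
    intro Y hY
    obtain ⟨w, hw0, hw1, hwip, -⟩ := tw_key A e hY
    rw [hwip]
    calc twPerm m A = ∑ σ : Equiv.Perm (Fin n), w σ * twPerm m A := by
          rw [← Finset.sum_mul, hw1, one_mul]
      _ ≤ ∑ σ, w σ * partSum A (permPart e σ) :=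
          Finset.sum_le_sum fun σ _ => mul_le_mul_of_nonneg_left (hle (isTW_permPart e σ)) (hw0 σ)
  have hY0mem : twY m P0 ∈ stochPolytope m := twY_mem hm hP0
  have hY0val : wip m A (twY m P0) = twPerm m A := by rw [wip_twY hm, hP0val]
  constructor
  · exact ⟨⟨twY m P0, hY0mem, hY0val.symm⟩, by rintro v ⟨Y, hY, rfl⟩; exact hlb Y hY⟩
  constructor
  · -- unique minimizer → nonsingular
    intro huniq hsing
    obtain ⟨P, Q, hP, hQ, hPQ, hval, hmin⟩ := hsing
    have hPmin : partSum A P = twPerm m A :=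
      le_antisymm (le_csInf hSne (by rintro b ⟨R, hR, rfl⟩; exact hmin R hR)) (hle hP)
    have hQmin : partSum A Q = twPerm m A := by rw [← hval]; exact hPmin
    have h1 : twY m P = twY m Q :=
      (huniq.unique ⟨twY_mem hm hP, by rw [wip_twY hm, hPmin]⟩
        ⟨twY_mem hm hQ, by rw [wip_twY hm, hQmin]⟩)
    apply hPQ
    funext i
    ext j
    have h2 := congrFun (congrFun h1 i) j
    unfold twY at h2
    constructor
    · intro hj
      by_contra hj'
      rw [if_pos hj, if_neg hj'] at h2
      exact inv_ne_zero (hm0 i) h2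
    · intro hj
      by_contra hj'
      rw [if_neg hj', if_pos hj] at h2
      exact inv_ne_zero (hm0 i) h2.symm
  · -- nonsingular → unique minimizer
    intro hns
    have huniqP : ∀ Q, IsTWPartition m Q → partSum A Q = twPerm m A → Q = P0 := by
      intro Q hQ hQv
      by_contra hne
      exact hns ⟨Q, P0, hQ, hP0, hne, by rw [hQv, hP0val],
        fun R hR => by rw [hQv]; exact hle hR⟩
    refine ⟨twY m P0, ⟨hY0mem, hY0val⟩, ?_⟩
    rintro Y ⟨hY, hval⟩
    obtain ⟨w, hw0, hw1, hwip, hentry⟩ := tw_key A e hY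
    -- every permutation with positive weight induces the partition P0
    have hminσ : ∀ σ : Equiv.Perm (Fin n), w σ ≠ 0 → permPart e σ = P0 := by
      intro σ hσ
      have h0 : ∑ τ : Equiv.Perm (Fin n), w τ * (partSum A (permPart e τ) - twPerm m A) = 0 := by
        have hexp : ∑ τ : Equiv.Perm (Fin n), w τ * (partSum A (permPart e τ) - twPerm m A)
            = (∑ τ, w τ * partSum A (permPart e τ)) - (∑ τ, w τ) * twPerm m A := by
          rw [Finset.sum_mul, ← Finset.sum_sub_distrib]
          exact Finset.sum_congr rfl fun τ _ => by ring
        rw [hexp, ← hwip, hval, hw1, one_mul, sub_self]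
      have hterm := (Finset.sum_eq_zero_iff_of_nonneg (fun τ _ =>
        mul_nonneg (hw0 τ) (sub_nonneg.2 (hle (isTW_permPart e τ))))).1 h0 σ (Finset.mem_univ σ)
      rcases mul_eq_zero.1 hterm with h | h
      · exact absurd h hσ
      · exact huniqP _ (isTW_permPart e σ) (by linarith [sub_eq_zero.1 h])
    -- entries outside the partition vanish
    have hzero : ∀ i j, j ∉ P0 i → Y i j = 0 := by
      intro i j hj
      have hk0 : 0 < m i := hm i
      have hent := hentry ⟨i, ⟨0, hk0⟩⟩ j
      rw [hent]
      apply Finset.sum_eq_zero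
      intro σ _
      by_cases hσ : w σ = 0
      · rw [hσ, zero_mul]
      · have hQ := hminσ σ hσ
        have hne : σ (e ⟨i, ⟨0, hk0⟩⟩) ≠ j := by
          intro hEq
          apply hj
          rw [← hQ]
          exact Finset.mem_image.2 ⟨⟨0, hk0⟩, Finset.mem_univ _, hEq⟩
        rw [permMatrix_entry, if_neg hne, mul_zero]
    funext i j
    by_cases hj : j ∈ P0 i
    · obtain ⟨i1, hi1, hiu⟩ := hP0.2 j
      have hii : i1 = i := (hiu i hj).symm
      have hcol := hY.2.2 j
      rw [Finset.sum_eq_single i] at hcol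
      · have hYij : Y i j = (m i : ℝ)⁻¹ := eq_inv_of_mul_eq_one_right hcol
        rw [hYij]
        unfold twY
        rw [if_pos hj]
      · intro i' _ hne
        have : j ∉ P0 i' := fun h => hne ((hiu i' h).trans hii)
        rw [hzero i' j this, mul_zero]
      · intro h
        exact absurd (Finset.mem_univ i) h
    · rw [hzero i j hj]
      unfold twY
      rw [if_neg hj]
end
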